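/- Let 1 ≤ ℓ < k ≤ n/2 and set s = ½ [n−1 choose k−1]_q^{1/2} [n−1 choose ℓ−1]_q^{1/2}. For i = 2,…,ℓ one has s · (s − θ_i^{k,k} a(0)) > (θ_i^{k,ℓ} b(0))²; equivalently, the 2×2 matrix with diagonal entries s − θ_i^{k,k} a(0) and s, and off-diagonal entries −θ_i^{k,ℓ} b(0), has strictly positive determinant. -/

import Mathlib

/-!
With `φ(m) = (q⁻¹; q⁻¹)_m`, one has `[a choose b]_q = q^{b(a-b)} φ(a) / (φ(b) φ(a-b))`, and for
`q ≥ 2` the values `φ(m)` decrease from `1` but stay above `1/4`. Inserting this into the squares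
of `θ_i^{k,k} a(0)` and `θ_i^{k,ℓ} b(0)` (squaring removes the half-integer powers of `q`), both
become `s²` times a power of `q` and a ratio of `φ`'s whose cancellations leave a bounded constant.
The powers are `q^{i(i-1) - 2i(n-k)} ≤ q^{-8}` and `q^{-(i-1)(2n-i-k-ℓ)} ≤ q^{-5}`, which gives
`|θ_i^{k,k} a(0)| ≤ s/4` and `(θ_i^{k,ℓ} b(0))² ≤ s²/2`; hence
`s (s - θ_i^{k,k} a(0)) ≥ 3s²/4 > (θ_i^{k,ℓ} b(0))²`.
-/

/-- The Gaussian binomial coefficient `[a choose b]_q`, as a real number: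
`∏_{i=0}^{b-1} (q^(a-i)-1)/(q^(b-i)-1)` for `a, b ≥ 0`, and `0` if `a < 0` or `b < 0`. -/
noncomputable def gbinom (q : ℝ) (a b : ℤ) : ℝ :=
  if 0 ≤ a ∧ 0 ≤ b then
    ∏ i ∈ Finset.range b.toNat, (q ^ (a - i) - 1) / (q ^ (b - i) - 1)
  else 0

/-- The eigenvalue
`θ_i^{k,ℓ} = (-1)^i q^{C(i,2) + kℓ - i(k+ℓ)/2} [n-k-i choose ℓ-i] [n-2i choose k-i]^{1/2}
[n-2i choose ℓ-i]^{-1/2}` for `i ≤ k ≤ n - i`, and `0` if `k < i` or `k > n - i`.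
(The half-integer power of `q` is expressed via `√q`.) -/
noncomputable def theta (q : ℝ) (n i k l : ℕ) : ℝ :=
  if i ≤ k ∧ k ≤ n - i then
    (-1) ^ i * (Real.sqrt q) ^ ((i * (i - 1) : ℤ) + 2 * k * l - i * (k + l)) *
      gbinom q ((n : ℤ) - k - i) ((l : ℤ) - i) *
      Real.sqrt (gbinom q ((n : ℤ) - 2 * i) ((k : ℤ) - i)) *
      (Real.sqrt (gbinom q ((n : ℤ) - 2 * i) ((l : ℤ) - i)))⁻¹
  else 0

/-- `a(λ)`, defined by
`q^{k²}(q^k-1)[n-k choose k] a(λ) = ½ q^ℓ (q^{k-ℓ}-1)[n-1 choose k-1]^{1/2}[n-1 choose ℓ-1]^{1/2}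
+ q^{ℓ²}(q^ℓ-1)[n-ℓ choose ℓ] λ`. -/
noncomputable def aF (q : ℝ) (n k l : ℕ) (lam : ℝ) : ℝ :=
  ((1 / 2) * q ^ l * (q ^ ((k : ℤ) - l) - 1) *
      Real.sqrt (gbinom q ((n : ℤ) - 1) ((k : ℤ) - 1)) *
      Real.sqrt (gbinom q ((n : ℤ) - 1) ((l : ℤ) - 1)) +
    q ^ (l ^ 2) * (q ^ l - 1) * gbinom q ((n : ℤ) - l) l * lam) /
  (q ^ (k ^ 2) * (q ^ k - 1) * gbinom q ((n : ℤ) - k) k)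

/-- `b(λ)`, defined by
`q^{kℓ}[n-k choose ℓ] b(λ) = -½ q^ℓ [n-1 choose ℓ]
- q^{ℓ²}[n-ℓ choose ℓ][n-1 choose ℓ-1]^{1/2}[n-1 choose k-1]^{-1/2} λ`. -/
noncomputable def bF (q : ℝ) (n k l : ℕ) (lam : ℝ) : ℝ :=
  (-(1 / 2) * q ^ l * gbinom q ((n : ℤ) - 1) l -
    q ^ (l ^ 2) * gbinom q ((n : ℤ) - l) l *
      Real.sqrt (gbinom q ((n : ℤ) - 1) ((l : ℤ) - 1)) *
      (Real.sqrt (gbinom q ((n : ℤ) - 1) ((k : ℤ) - 1)))⁻¹ * lam) /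
  (q ^ (k * l) * gbinom q ((n : ℤ) - k) l)


open Finset

/-- The q-Pochhammer symbol `(q⁻¹; q⁻¹)_m`. -/
noncomputable def qPoch (q : ℝ) (m : ℕ) : ℝ := ∏ t ∈ range m, (1 - q⁻¹ ^ (t + 1))

section qPoch

variable {q : ℝ}

lemma qPoch_zero : qPoch q 0 = 1 := prod_range_zero _

lemma qPoch_succ (m : ℕ) : qPoch q (m + 1) = qPoch q m * (1 - q⁻¹ ^ (m + 1)) :=
  prod_range_succ _ _

lemma qPoch_add (a b : ℕ) :
    qPoch q (a + b) = qPoch q a * ∏ t ∈ range b, (1 - q⁻¹ ^ (a + t + 1)) :=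
  prod_range_add _ _ _

lemma one_sub_inv_pow_pos (hq : 1 < q) (t : ℕ) : 0 < 1 - q⁻¹ ^ (t + 1) := by
  have : q⁻¹ ^ (t + 1) < 1 := pow_lt_one₀ (by positivity) (inv_lt_one_of_one_lt₀ hq) t.succ_ne_zero
  linarith

lemma qPoch_pos (hq : 1 < q) (m : ℕ) : 0 < qPoch q m :=
  prod_pos fun t _ => one_sub_inv_pow_pos hq t

lemma qPoch_antitone (hq : 1 < q) : Antitone (qPoch q) := by
  refine antitone_nat_of_succ_le fun m => ?_
  rw [qPoch_succ]
  refine mul_le_of_le_one_right (qPoch_pos hq m).le ?_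
  have : 0 ≤ q⁻¹ ^ (m + 1) := by have := (zero_lt_one.trans hq).le; positivity
  linarith

lemma one_sub_sum_le_prod_one_sub {ι : Type*} (s : Finset ι) {f : ι → ℝ}
    (h0 : ∀ i ∈ s, 0 ≤ f i) (h1 : ∀ i ∈ s, f i ≤ 1) : 1 - ∑ i ∈ s, f i ≤ ∏ i ∈ s, (1 - f i) := by
  induction s using Finset.cons_induction with
  | empty => simp
  | cons a s ha ih =>
    rw [prod_cons, sum_cons]
    have hs : 0 ≤ ∑ i ∈ s, f i := sum_nonneg fun i hi => h0 i (mem_cons_of_mem hi)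
    have ih := ih (fun i hi => h0 i (mem_cons_of_mem hi)) (fun i hi => h1 i (mem_cons_of_mem hi))
    nlinarith [h0 a (mem_cons_self a s), h1 a (mem_cons_self a s)]

lemma quarter_le_qPoch (hq : 2 ≤ q) (m : ℕ) : 1 / 4 ≤ qPoch q m := by
  have hr0 : 0 ≤ q⁻¹ := by positivity
  have hr : q⁻¹ ≤ 1 / 2 := by rw [inv_le_comm₀ (by linarith) (by norm_num)]; linarith
  cases m with
  | zero => rw [qPoch_zero]; norm_num
  | succ m =>
    have hsum : ∑ t ∈ range m, q⁻¹ ^ (t + 2) ≤ 1 / 2 :=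
      calc ∑ t ∈ range m, q⁻¹ ^ (t + 2)
          ≤ ∑ t ∈ range m, (1 / 2 : ℝ) ^ (t + 2) := sum_le_sum fun t _ => pow_le_pow_left₀ hr0 hr _
        _ = 1 / 4 * ∑ t ∈ range m, (1 / 2 : ℝ) ^ t := by
          rw [mul_sum]; exact sum_congr rfl fun t _ => by ring
        _ ≤ 1 / 2 := by linarith [sum_geometric_two_le m]
    have htail := one_sub_sum_le_prod_one_sub (range m) (f := fun t => q⁻¹ ^ (t + 2))
      (fun t _ => by positivity) (fun t _ => pow_le_one₀ hr0 (by linarith))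
    rw [qPoch, prod_range_succ']
    simp only [zero_add, pow_one]
    nlinarith

lemma qPoch_div_le_one (hq : 1 < q) {x y : ℕ} (h : x ≤ y) : qPoch q y / qPoch q x ≤ 1 :=
  div_le_one_of_le₀ (qPoch_antitone hq h) (qPoch_pos hq x).le

lemma qPoch_div_le_four (hq : 2 ≤ q) (x y : ℕ) : qPoch q x / qPoch q y ≤ 4 := by
  have hx : qPoch q x ≤ 1 := qPoch_zero (q := q) ▸ qPoch_antitone (by linarith) (Nat.zero_le x)
  rw [div_le_iff₀ (qPoch_pos (by linarith) y)]
  linarith [quarter_le_qPoch hq y]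

end qPoch

section gbinom

variable {q : ℝ}

lemma pow_sub_one_eq_mul (hq : q ≠ 0) (m : ℕ) : q ^ m - 1 = q ^ m * (1 - q⁻¹ ^ m) := by
  rw [mul_sub, mul_one, ← mul_pow, mul_inv_cancel₀ hq, one_pow]

lemma gbinom_natCast_add (hq : 1 < q) (b c : ℕ) :
    gbinom q ((b + c : ℕ) : ℤ) b = q ^ (b * c) * (qPoch q (b + c) / (qPoch q b * qPoch q c)) := by
  have hq0 : q ≠ 0 := by positivity
  have hfactor : ∀ t : ℕ, (q ^ (c + t + 1) - 1) / (q ^ (t + 1) - 1)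
      = q ^ c * ((1 - q⁻¹ ^ (c + t + 1)) / (1 - q⁻¹ ^ (t + 1))) := by
    intro t
    have := (one_sub_inv_pow_pos hq t).ne'
    rw [pow_sub_one_eq_mul hq0, pow_sub_one_eq_mul hq0, add_assoc, pow_add q c]
    field_simp
  rw [gbinom, if_pos (by omega), Int.toNat_natCast,
    ← prod_range_reflect (fun t : ℕ => (q ^ (((b + c : ℕ) : ℤ) - t) - 1) / (q ^ ((b : ℤ) - t) - 1)),
    prod_congr rfl (g := fun t => (q ^ (c + t + 1) - 1) / (q ^ (t + 1) - 1)) fun t ht => by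
      have := mem_range.1 ht
      rw [show ((b + c : ℕ) : ℤ) - ((b - 1 - t : ℕ) : ℤ) = ((c + t + 1 : ℕ) : ℤ) by omega,
        show (b : ℤ) - ((b - 1 - t : ℕ) : ℤ) = ((t + 1 : ℕ) : ℤ) by omega, zpow_natCast,
        zpow_natCast],
    prod_congr rfl fun t _ => hfactor t, prod_mul_distrib, prod_const, card_range, prod_div_distrib,
    ← qPoch.eq_1, add_comm b c, qPoch_add, ← pow_mul, mul_comm c b]
  have := (qPoch_pos hq c).ne'
  field_simp

lemma gbinom_eq (hq : 1 < q) (a b : ℤ) (A B C : ℕ)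
    (h : (A : ℤ) = a ∧ (B : ℤ) = b ∧ (C : ℤ) = a - b := by omega) :
    gbinom q a b = q ^ (b * (a - b)) * (qPoch q A / (qPoch q B * qPoch q C)) := by
  obtain ⟨rfl, rfl, hC⟩ := h
  obtain rfl : A = B + C := by omega
  rw [show ((B : ℤ) * ((B + C : ℕ) - B)) = ((B * C : ℕ) : ℤ) by push_cast; ring, zpow_natCast]
  exact gbinom_natCast_add hq B C

lemma gbinom_pos (hq : 1 < q) (a b : ℤ) (A B C : ℕ)
    (h : (A : ℤ) = a ∧ (B : ℤ) = b ∧ (C : ℤ) = a - b := by omega) : 0 < gbinom q a b := by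
  have := qPoch_pos hq A; have := qPoch_pos hq B; have := qPoch_pos hq C
  rw [gbinom_eq hq a b A B C h]
  positivity

end gbinom

section theta

variable {q : ℝ}

lemma sqrt_zpow_sq (hq : 0 ≤ q) (m : ℤ) : (Real.sqrt q ^ m) ^ 2 = q ^ m := by
  rw [← zpow_natCast, ← zpow_mul, mul_comm, zpow_mul, zpow_natCast, Real.sq_sqrt hq]

lemma theta_sq (hq : 0 ≤ q) {n i k l : ℕ} (hik : i ≤ k) (hkn : k ≤ n - i)
    (hk : 0 ≤ gbinom q ((n : ℤ) - 2 * i) ((k : ℤ) - i))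
    (hl : 0 ≤ gbinom q ((n : ℤ) - 2 * i) ((l : ℤ) - i)) :
    theta q n i k l ^ 2 = q ^ ((i * (i - 1) : ℤ) + 2 * k * l - i * (k + l)) *
      gbinom q ((n : ℤ) - k - i) ((l : ℤ) - i) ^ 2 *
      (gbinom q ((n : ℤ) - 2 * i) ((k : ℤ) - i) / gbinom q ((n : ℤ) - 2 * i) ((l : ℤ) - i)) := by
  rw [theta, if_pos ⟨hik, hkn⟩]
  have hsign : ((-1 : ℝ) ^ i) ^ 2 = 1 := by rw [← pow_mul, pow_mul', neg_one_sq, one_pow]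
  simp only [mul_pow, inv_pow, hsign, sqrt_zpow_sq hq, Real.sq_sqrt hk, Real.sq_sqrt hl]
  ring

end theta

section identities

variable {q : ℝ}

lemma sq_theta_mul_aF_zero (hq : 1 < q) {n i k l : ℕ} (hl : 1 ≤ l) (hlk : l ≤ k) (hik : i ≤ k)
    (hkn : 2 * k ≤ n) :
    (theta q n i k k * aF q n k l 0) ^ 2 =
      1 / 4 * (q ^ l * (q ^ ((k : ℤ) - l) - 1) / (q ^ k - 1)) ^ 2 *
        q ^ ((i * (i - 1) : ℤ) - 2 * i * (n - k)) *
        (qPoch q (n - k - i) / qPoch q (n - k)) ^ 2 * (qPoch q k / qPoch q (k - i)) ^ 2 *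
        (gbinom q ((n : ℤ) - 1) ((k : ℤ) - 1) * gbinom q ((n : ℤ) - 1) ((l : ℤ) - 1)) := by
  have hq0 : 0 < q := zero_lt_one.trans hq
  have hG := gbinom_pos hq ((n : ℤ) - 2 * i) ((k : ℤ) - i) (n - 2 * i) (k - i) (n - i - k)
  have hGk := gbinom_pos hq ((n : ℤ) - 1) ((k : ℤ) - 1) (n - 1) (k - 1) (n - k)
  have hGl := gbinom_pos hq ((n : ℤ) - 1) ((l : ℤ) - 1) (n - 1) (l - 1) (n - l)
  have hqk : q ^ k - 1 ≠ 0 := (sub_pos.2 (one_lt_pow₀ hq (by omega))).ne'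
  have := (qPoch_pos hq (n - k - i)).ne'; have := (qPoch_pos hq (n - k)).ne'
  have := (qPoch_pos hq k).ne'; have := (qPoch_pos hq (k - i)).ne'
  have := (qPoch_pos hq (n - 2 * k)).ne'
  rw [mul_pow, theta_sq hq0.le hik (by omega) hG.le hG.le, div_self hG.ne', mul_one, aF,
    gbinom_eq hq ((n : ℤ) - k - i) ((k : ℤ) - i) (n - k - i) (k - i) (n - 2 * k),
    gbinom_eq hq ((n : ℤ) - k) k (n - k) k (n - 2 * k)]
  simp only [mul_zero, add_zero, div_pow, mul_pow, Real.sq_sqrt hGk.le, Real.sq_sqrt hGl.le]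
  -- split the exponent into the powers of `q` occurring on the left, so that they cancel as atoms
  rw [← zpow_natCast q (k ^ 2),
    show (i * (i - 1) : ℤ) - 2 * i * (n - k) = ((i * (i - 1) : ℤ) + 2 * k * k - i * (k + k)) +
      ((k : ℤ) - i) * ((n : ℤ) - k - i - ((k : ℤ) - i)) +
      ((k : ℤ) - i) * ((n : ℤ) - k - i - ((k : ℤ) - i))
      - ((k ^ 2 : ℕ) : ℤ) - ((k ^ 2 : ℕ) : ℤ) - (k : ℤ) * ((n : ℤ) - k - k)
      - (k : ℤ) * ((n : ℤ) - k - k) by push_cast; ring]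
  simp only [zpow_add₀ hq0.ne', zpow_sub₀ hq0.ne']
  field_simp
  ring

lemma sq_theta_mul_bF_zero (hq : 1 < q) {n i k l : ℕ} (hl : 1 ≤ l) (hil : i ≤ l) (hlk : l ≤ k)
    (hkn : k + l ≤ n) :
    (theta q n i k l * bF q n k l 0) ^ 2 =
      1 / 4 * q ^ (-((i : ℤ) - 1) * (2 * n - i - k - l)) *
        (qPoch q (n - k - i) / qPoch q (n - k)) * (qPoch q (n - i - l) / qPoch q (n - 1 - l)) *
        (qPoch q (k - 1) / qPoch q (k - i)) * (qPoch q (l - 1) / qPoch q (l - i)) *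
        (qPoch q (n - l) / qPoch q (n - 1 - l)) *
        (gbinom q ((n : ℤ) - 1) ((k : ℤ) - 1) * gbinom q ((n : ℤ) - 1) ((l : ℤ) - 1)) := by
  have hq0 : 0 < q := zero_lt_one.trans hq
  have hGk := gbinom_pos hq ((n : ℤ) - 2 * i) ((k : ℤ) - i) (n - 2 * i) (k - i) (n - k - i)
  have hGl := gbinom_pos hq ((n : ℤ) - 2 * i) ((l : ℤ) - i) (n - 2 * i) (l - i) (n - i - l)
  have := (qPoch_pos hq (n - k - i)).ne'; have := (qPoch_pos hq (n - k)).ne'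
  have := (qPoch_pos hq (n - i - l)).ne'; have := (qPoch_pos hq (n - 1 - l)).ne'
  have := (qPoch_pos hq (k - 1)).ne'; have := (qPoch_pos hq (k - i)).ne'
  have := (qPoch_pos hq (l - 1)).ne'; have := (qPoch_pos hq (l - i)).ne'
  have := (qPoch_pos hq (n - l)).ne'; have := (qPoch_pos hq (n - 2 * i)).ne'
  have := (qPoch_pos hq (n - 1)).ne'; have := (qPoch_pos hq l).ne'
  have := (qPoch_pos hq (n - k - l)).ne'
  rw [mul_pow, theta_sq hq0.le (by omega) (by omega) hGk.le hGl.le, bF,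
    gbinom_eq hq ((n : ℤ) - k - i) ((l : ℤ) - i) (n - k - i) (l - i) (n - k - l),
    gbinom_eq hq ((n : ℤ) - 2 * i) ((k : ℤ) - i) (n - 2 * i) (k - i) (n - k - i),
    gbinom_eq hq ((n : ℤ) - 2 * i) ((l : ℤ) - i) (n - 2 * i) (l - i) (n - i - l),
    gbinom_eq hq ((n : ℤ) - 1) l (n - 1) l (n - 1 - l),
    gbinom_eq hq ((n : ℤ) - k) l (n - k) l (n - k - l),
    gbinom_eq hq ((n : ℤ) - 1) ((k : ℤ) - 1) (n - 1) (k - 1) (n - k),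
    gbinom_eq hq ((n : ℤ) - 1) ((l : ℤ) - 1) (n - 1) (l - 1) (n - l)]
  simp only [mul_zero, sub_zero]
  rw [← zpow_natCast q l, ← zpow_natCast q (k * l),
    show -((i : ℤ) - 1) * (2 * n - i - k - l) = ((i * (i - 1) : ℤ) + 2 * k * l - i * (k + l)) +
      ((l : ℤ) - i) * ((n : ℤ) - k - i - ((l : ℤ) - i)) +
      ((l : ℤ) - i) * ((n : ℤ) - k - i - ((l : ℤ) - i)) +
      ((k : ℤ) - i) * ((n : ℤ) - 2 * i - ((k : ℤ) - i)) -
      ((l : ℤ) - i) * ((n : ℤ) - 2 * i - ((l : ℤ) - i)) + (l : ℤ) + (l : ℤ) -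
      ((k * l : ℕ) : ℤ) - ((k * l : ℕ) : ℤ) + (l : ℤ) * ((n : ℤ) - 1 - l) +
      (l : ℤ) * ((n : ℤ) - 1 - l) - (l : ℤ) * ((n : ℤ) - k - l) - (l : ℤ) * ((n : ℤ) - k - l) -
      ((k : ℤ) - 1) * ((n : ℤ) - 1 - ((k : ℤ) - 1)) - ((l : ℤ) - 1) * ((n : ℤ) - 1 - ((l : ℤ) - 1))
      by push_cast; ring]
  simp only [zpow_add₀ hq0.ne', zpow_sub₀ hq0.ne']
  field_simp
  ring

end identities

section bounds

variable {q : ℝ}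

lemma zpow_le_inv_two_pow (hq : 2 ≤ q) {e : ℤ} {m : ℕ} (h : e ≤ -m) : q ^ e ≤ 2⁻¹ ^ m := by
  calc q ^ e ≤ q ^ (-(m : ℤ)) := zpow_le_zpow_right₀ (by linarith) h
    _ = (q ^ m)⁻¹ := by rw [zpow_neg, zpow_natCast]
    _ ≤ 2⁻¹ ^ m := by
      rw [inv_pow]; exact inv_anti₀ (by positivity) (pow_le_pow_left₀ (by norm_num) hq m)

lemma pow_mul_zpow_sub_sub_one {k l : ℕ} (hlk : l ≤ k) :
    q ^ l * (q ^ ((k : ℤ) - l) - 1) = q ^ k - q ^ l := by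
  rw [show ((k : ℤ) - l) = ((k - l : ℕ) : ℤ) by omega, zpow_natCast, mul_sub, ← pow_add,
    Nat.add_sub_cancel' hlk, mul_one]

lemma sq_theta_mul_aF_zero_le (hq : 2 ≤ q) {n i k l : ℕ} (hi : 2 ≤ i) (hl : 1 ≤ l) (hlk : l ≤ k)
    (hik : i < k) (hkn : 2 * k ≤ n) :
    (theta q n i k k * aF q n k l 0) ^ 2 ≤
      gbinom q ((n : ℤ) - 1) ((k : ℤ) - 1) * gbinom q ((n : ℤ) - 1) ((l : ℤ) - 1) / 64 := by
  have hq1 : 1 < q := by linarith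
  have hGk := gbinom_pos hq1 ((n : ℤ) - 1) ((k : ℤ) - 1) (n - 1) (k - 1) (n - k)
  have hGl := gbinom_pos hq1 ((n : ℤ) - 1) ((l : ℤ) - 1) (n - 1) (l - 1) (n - l)
  have hql : 1 ≤ q ^ l := one_le_pow₀ hq1.le
  have hqk : 1 ≤ q ^ k := one_le_pow₀ hq1.le
  have hqlk : q ^ l ≤ q ^ k := pow_le_pow_right₀ hq1.le hlk
  have hR0 : 0 ≤ (q ^ k - q ^ l) / (q ^ k - 1) := div_nonneg (by linarith) (by linarith)
  have hR1 : (q ^ k - q ^ l) / (q ^ k - 1) ≤ 1 :=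
    div_le_one_of_le₀ (by linarith) (by linarith)
  have hE : (i * (i - 1) : ℤ) - 2 * i * (n - k) ≤ -(8 : ℕ) := by
    have : (i : ℤ) + 1 ≤ n - k := by omega
    push_cast; nlinarith
  have := qPoch_pos hq1 (n - k - i); have := qPoch_pos hq1 (n - k)
  have := qPoch_pos hq1 k; have := qPoch_pos hq1 (k - i)
  rw [sq_theta_mul_aF_zero hq1 hl hlk hik.le hkn, pow_mul_zpow_sub_sub_one hlk]
  calc
    _ ≤ 1 / 4 * 1 ^ 2 * 2⁻¹ ^ 8 * 4 ^ 2 * 1 ^ 2 *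
        (gbinom q ((n : ℤ) - 1) ((k : ℤ) - 1) * gbinom q ((n : ℤ) - 1) ((l : ℤ) - 1)) := by
      gcongr
      · exact zpow_le_inv_two_pow hq hE
      · exact qPoch_div_le_four hq _ _
      · exact qPoch_div_le_one hq1 (Nat.sub_le k i)
    _ = _ := by ring

lemma sq_theta_mul_bF_zero_le (hq : 2 ≤ q) {n i k l : ℕ} (hi : 2 ≤ i) (hil : i ≤ l) (hlk : l < k)
    (hkn : 2 * k ≤ n) :
    (theta q n i k l * bF q n k l 0) ^ 2 ≤
      gbinom q ((n : ℤ) - 1) ((k : ℤ) - 1) * gbinom q ((n : ℤ) - 1) ((l : ℤ) - 1) / 8 := by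
  have hq1 : 1 < q := by linarith
  have hGk := gbinom_pos hq1 ((n : ℤ) - 1) ((k : ℤ) - 1) (n - 1) (k - 1) (n - k)
  have hGl := gbinom_pos hq1 ((n : ℤ) - 1) ((l : ℤ) - 1) (n - 1) (l - 1) (n - l)
  have hE : -((i : ℤ) - 1) * (2 * n - i - k - l) ≤ -(5 : ℕ) := by
    have h1 : (1 : ℤ) ≤ i - 1 := by omega
    have h2 : (5 : ℤ) ≤ 2 * n - i - k - l := by omega
    push_cast; nlinarith
  have := qPoch_pos hq1 (n - k - i); have := qPoch_pos hq1 (n - k)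
  have := qPoch_pos hq1 (n - i - l); have := qPoch_pos hq1 (n - 1 - l)
  have := qPoch_pos hq1 (k - 1); have := qPoch_pos hq1 (k - i)
  have := qPoch_pos hq1 (l - 1); have := qPoch_pos hq1 (l - i)
  have := qPoch_pos hq1 (n - l)
  rw [sq_theta_mul_bF_zero hq1 (by omega) hil hlk.le (by omega)]
  calc
    _ ≤ 1 / 4 * 2⁻¹ ^ 5 * 4 * 4 * 1 * 1 * 1 *
        (gbinom q ((n : ℤ) - 1) ((k : ℤ) - 1) * gbinom q ((n : ℤ) - 1) ((l : ℤ) - 1)) := by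
      gcongr
      · exact zpow_le_inv_two_pow hq hE
      · exact qPoch_div_le_four hq _ _
      · exact qPoch_div_le_four hq _ _
      · exact qPoch_div_le_one hq1 (by omega)
      · exact qPoch_div_le_one hq1 (by omega)
      · exact qPoch_div_le_one hq1 (by omega)
    _ = _ := by ring

end bounds

theorem det_Si_zero_pos_general
    (q n k l : ℕ) (hq : IsPrimePow q)
    (hlk : l < k) (hkn : 2 * k ≤ n)
    (i : ℕ) (hi2 : 2 ≤ i) (hil : i ≤ l) :
    ((1 / 2) * Real.sqrt (gbinom (q : ℝ) ((n : ℤ) - 1) ((k : ℤ) - 1)) *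
        Real.sqrt (gbinom (q : ℝ) ((n : ℤ) - 1) ((l : ℤ) - 1))) *
      ((1 / 2) * Real.sqrt (gbinom (q : ℝ) ((n : ℤ) - 1) ((k : ℤ) - 1)) *
          Real.sqrt (gbinom (q : ℝ) ((n : ℤ) - 1) ((l : ℤ) - 1)) -
        theta (q : ℝ) n i k k * aF (q : ℝ) n k l 0) >
      (theta (q : ℝ) n i k l * bF (q : ℝ) n k l 0) ^ 2 := by
  have hq2 : (2 : ℝ) ≤ q := by exact_mod_cast hq.two_le
  have hq1 : (1 : ℝ) < q := by linarith
  have hGk := gbinom_pos hq1 ((n : ℤ) - 1) ((k : ℤ) - 1) (n - 1) (k - 1) (n - k)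
  have hGl := gbinom_pos hq1 ((n : ℤ) - 1) ((l : ℤ) - 1) (n - 1) (l - 1) (n - l)
  set s := 1 / 2 * Real.sqrt (gbinom (q : ℝ) ((n : ℤ) - 1) ((k : ℤ) - 1)) *
    Real.sqrt (gbinom (q : ℝ) ((n : ℤ) - 1) ((l : ℤ) - 1)) with hs_def
  have hs : 0 < s := by positivity
  have hs2 : s ^ 2 = gbinom (q : ℝ) ((n : ℤ) - 1) ((k : ℤ) - 1) *
      gbinom (q : ℝ) ((n : ℤ) - 1) ((l : ℤ) - 1) / 4 := by
    rw [hs_def, mul_pow, mul_pow, Real.sq_sqrt hGk.le, Real.sq_sqrt hGl.le]; ring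
  have hX : theta (q : ℝ) n i k k * aF (q : ℝ) n k l 0 ≤ s / 4 := by
    refine (abs_le_of_sq_le_sq' ?_ (by positivity)).2
    linarith [sq_theta_mul_aF_zero_le hq2 hi2 (by omega) hlk.le (by omega) hkn]
  have hY := sq_theta_mul_bF_zero_le hq2 hi2 hil hlk hkn
  nlinarith

/-- **Positivity of the determinant of `S_i(0)` (key inequality of Section 4).**
For `1 ≤ ℓ < k ≤ n/2`, with `s = ½[n-1 choose k-1]^{1/2}[n-1 choose ℓ-1]^{1/2}`, one has
`s(s - θ_i^{k,k} a(0)) > (θ_i^{k,ℓ} b(0))²` for `i = 2, …, ℓ`; equivalently, the `2 × 2`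
matrix with diagonal `s - θ_i^{k,k} a(0)`, `s` and off-diagonal entries `-θ_i^{k,ℓ} b(0)`
has strictly positive determinant. -/
theorem det_Si_zero_pos
    (q n k l : ℕ) (hq : IsPrimePow q)
    (hl1 : 1 ≤ l) (hlk : l < k) (hkn : 2 * k ≤ n)
    (i : ℕ) (hi2 : 2 ≤ i) (hil : i ≤ l) :
    ((1 / 2) * Real.sqrt (gbinom (q : ℝ) ((n : ℤ) - 1) ((k : ℤ) - 1)) *
        Real.sqrt (gbinom (q : ℝ) ((n : ℤ) - 1) ((l : ℤ) - 1))) *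
      ((1 / 2) * Real.sqrt (gbinom (q : ℝ) ((n : ℤ) - 1) ((k : ℤ) - 1)) *
          Real.sqrt (gbinom (q : ℝ) ((n : ℤ) - 1) ((l : ℤ) - 1)) -
        theta (q : ℝ) n i k k * aF (q : ℝ) n k l 0) >
      (theta (q : ℝ) n i k l * bF (q : ℝ) n k l 0) ^ 2 :=
  det_Si_zero_pos_general q n k l hq hlk hkn i hi2 hil
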